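/- Under the Mallows model with 0 < φ < 1, consecutive expected positions are separated by at least (1−φ)/(1+φ): for σ drawn with probability φ^{K_τ(σ₀,σ)}/Z and any i ∈ [N−1], E[σ(σ₀⁻¹(i+1))] − E[σ(σ₀⁻¹(i))] ≥ (1−φ)/(1+φ). -/

import Mathlib

/-!
Pair each permutation `σ` with `σ * swap a b`, where `a = σ₀⁻¹ i` and `b = σ₀⁻¹ (i + 1)` are
adjacent in `σ₀`. If `σ a < σ b`, the transposition creates exactly one new discordant pair, so its
weight is `φ` times that of `σ`, while the gap `d = σ b - σ a ≥ 1` becomes `-d`. Hence each pair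
contributes `w ((1 + φ) d - (1 - φ)) + φ w (-(1 + φ) d - (1 - φ)) = (1 - φ)(1 + φ)(d - 1) w ≥ 0`
to `∑ ((1 + φ) (σ b - σ a) - (1 - φ)) φ ^ kendallTau σ₀ σ`, which is the claimed inequality
times `(1 + φ) Z`.
-/

def kendallTau {N : ℕ} (σ₁ σ₂ : Equiv.Perm (Fin N)) : ℕ :=
  (Finset.univ.filter fun p : Fin N × Fin N =>
    p.1 < p.2 ∧ ((σ₁ p.1 < σ₁ p.2 ∧ σ₂ p.2 < σ₂ p.1) ∨
                 (σ₁ p.2 < σ₁ p.1 ∧ σ₂ p.1 < σ₂ p.2))).card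

/-- The Mallows normalization constant. -/
noncomputable def mallowsZ (N : ℕ) (φ : ℝ) (σ₀ : Equiv.Perm (Fin N)) : ℝ :=
  ∑ σ : Equiv.Perm (Fin N), φ ^ kendallTau σ₀ σ

/-- Probability of an event under the Mallows distribution with center `σ₀`. -/
noncomputable def mallowsProb (N : ℕ) (φ : ℝ) (σ₀ : Equiv.Perm (Fin N))
    (E : Equiv.Perm (Fin N) → Prop) [DecidablePred E] : ℝ :=
  (∑ σ ∈ Finset.univ.filter E, φ ^ kendallTau σ₀ σ) / mallowsZ N φ σ₀

/-- Expected position of element `i` under the Mallows distribution. -/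
noncomputable def mallowsExp (N : ℕ) (φ : ℝ) (σ₀ : Equiv.Perm (Fin N)) (i : Fin N) : ℝ :=
  (∑ σ : Equiv.Perm (Fin N), ((σ i : ℕ) : ℝ) * φ ^ kendallTau σ₀ σ) / mallowsZ N φ σ₀

open Finset Equiv

def discordantPairs {N : ℕ} (σ₁ σ₂ : Perm (Fin N)) : Finset (Fin N × Fin N) :=
  {p | σ₁ p.1 < σ₁ p.2 ∧ σ₂ p.2 < σ₂ p.1}

-- Both sides list each discordant unordered pair once, oriented by `<` resp. by `σ₁`.
lemma kendallTau_eq_card_discordantPairs {N : ℕ} (σ₁ σ₂ : Perm (Fin N)) :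
    kendallTau σ₁ σ₂ = #(discordantPairs σ₁ σ₂) := by
  refine card_nbij' (fun p => if σ₁ p.1 < σ₁ p.2 then p else p.swap)
    (fun p => if p.1 < p.2 then p else p.swap) ?_ ?_ ?_ ?_ <;>
  · rintro ⟨x, y⟩ hp
    simp only [discordantPairs, coe_filter, mem_univ, true_and] at hp ⊢
    split_ifs <;> simp_all; grind

lemma swap_lt_swap_iff_of_val_eq_add_one {N : ℕ} {i j u v : Fin N} (hij : (j : ℕ) = i + 1) :
    swap i j u < swap i j v ↔ u < v ∧ ¬(u = i ∧ v = j) ∨ u = j ∧ v = i := by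
  simp only [swap_apply_def, Fin.lt_def, Fin.ext_iff]
  split_ifs <;> omega

lemma kendallTau_mul_swap_of_lt {N : ℕ} (σ₀ σ : Perm (Fin N)) {a b : Fin N}
    (hab : (σ₀ b : ℕ) = σ₀ a + 1) (h : σ a < σ b) :
    kendallTau σ₀ (σ * swap a b) = kendallTau σ₀ σ + 1 := by
  have hσ₀ : ∀ x, σ₀ (swap a b x) = swap (σ₀ a) (σ₀ b) (σ₀ x) := by
    simp [swap_apply_apply]
  have hmem : ∀ u v, σ₀ (swap a b u) < σ₀ (swap a b v) ∧ σ v < σ u ↔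
      (u, v) = (b, a) ∨ σ₀ u < σ₀ v ∧ σ v < σ u := by
    intro u v
    rw [hσ₀, hσ₀, swap_lt_swap_iff_of_val_eq_add_one hab]
    simp only [σ₀.injective.eq_iff, Prod.mk.injEq]
    grind
  have hba : (b, a) ∉ discordantPairs σ₀ σ := by
    have : ¬σ₀ b < σ₀ a := by rw [Fin.lt_def]; omega
    simp [discordantPairs, this]
  rw [kendallTau_eq_card_discordantPairs, kendallTau_eq_card_discordantPairs,
    ← card_insert_of_notMem hba]
  refine card_equiv ((swap a b).prodCongr (swap a b)) fun p => ?_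
  simp only [discordantPairs, mem_insert, mem_filter, mem_univ, true_and]
  simpa [Prod.ext_iff] using hmem (swap a b p.1) (swap a b p.2)

lemma sum_nonneg_of_add_comp_nonneg {α : Type*} [Fintype α] (e : α ≃ α) {f : α → ℝ}
    (h : ∀ x, 0 ≤ f x + f (e x)) : 0 ≤ ∑ x, f x := by
  have hsum : ∑ x, (f x + f (e x)) = 2 * ∑ x, f x := by
    rw [sum_add_distrib, e.sum_comp, two_mul]
  linarith [sum_nonneg fun x (_ : x ∈ univ) => h x]

section Mallows

variable {N : ℕ} {φ : ℝ} (σ₀ : Perm (Fin N))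

lemma mallowsZ_pos (hφ : 0 < φ) : 0 < mallowsZ N φ σ₀ :=
  sum_pos (fun _ _ => pow_pos hφ _) univ_nonempty

lemma mallowsExp_sub_mallowsExp (a b : Fin N) :
    mallowsExp N φ σ₀ b - mallowsExp N φ σ₀ a =
      (∑ σ : Perm (Fin N), (((σ b : ℕ) : ℝ) - (σ a : ℕ)) * φ ^ kendallTau σ₀ σ) /
        mallowsZ N φ σ₀ := by
  simp only [mallowsExp, ← sub_div, ← sum_sub_distrib, sub_mul]

lemma one_sub_mul_mallowsZ_le (hφ0 : 0 ≤ φ) (hφ1 : φ ≤ 1) {a b : Fin N}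
    (hab : (σ₀ b : ℕ) = σ₀ a + 1) :
    (1 - φ) * mallowsZ N φ σ₀ ≤
      (1 + φ) * ∑ σ : Perm (Fin N), (((σ b : ℕ) : ℝ) - (σ a : ℕ)) * φ ^ kendallTau σ₀ σ := by
  set f : Perm (Fin N) → ℝ := fun σ =>
    ((1 + φ) * (((σ b : ℕ) : ℝ) - (σ a : ℕ)) - (1 - φ)) * φ ^ kendallTau σ₀ σ with hf
  have hpair : ∀ σ : Perm (Fin N), σ a < σ b → 0 ≤ f σ + f (σ * swap a b) := by
    intro σ h
    have hgap : ((σ a : ℕ) : ℝ) + 1 ≤ (σ b : ℕ) := by exact_mod_cast Fin.lt_def.mp h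
    have hsum : f σ + f (σ * swap a b) =
        (1 - φ) * (1 + φ) * ((((σ b : ℕ) : ℝ) - (σ a : ℕ)) - 1) * φ ^ kendallTau σ₀ σ := by
      simp only [hf, Perm.mul_apply, swap_apply_left, swap_apply_right,
        kendallTau_mul_swap_of_lt σ₀ σ hab h, pow_succ]
      ring
    rw [hsum]
    exact mul_nonneg (mul_nonneg (mul_nonneg (by linarith) (by linarith)) (by linarith))
      (pow_nonneg hφ0 _)
  have hne : a ≠ b := fun h => by rw [h] at hab; omega
  have hf_nonneg : 0 ≤ ∑ σ, f σ := by
    refine sum_nonneg_of_add_comp_nonneg (Equiv.mulRight (swap a b)) fun σ => ?_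
    rcases lt_or_gt_of_ne (σ.injective.ne hne) with h | h
    · exact hpair σ h
    · have := hpair (σ * swap a b) (by simpa [Perm.mul_apply] using h)
      rwa [mul_swap_mul_self, add_comm] at this
  rw [mallowsZ, mul_sum, mul_sum, ← sub_nonneg, ← sum_sub_distrib]
  convert hf_nonneg using 2 with σ
  ring

end Mallows

theorem mallows_expectation_gap (N : ℕ) (φ : ℝ)
    (hφ0 : 0 < φ) (hφ1 : φ < 1) (σ₀ : Equiv.Perm (Fin N)) (i j : Fin N)
    (hij : (j : ℕ) = (i : ℕ) + 1) :
    mallowsExp N φ σ₀ (σ₀⁻¹ j) - mallowsExp N φ σ₀ (σ₀⁻¹ i) ≥ (1 - φ) / (1 + φ) := by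
  have hadj : (σ₀ (σ₀⁻¹ j) : ℕ) = σ₀ (σ₀⁻¹ i) + 1 := by simpa using hij
  rw [ge_iff_le, mallowsExp_sub_mallowsExp,
    div_le_div_iff₀ (by linarith) (mallowsZ_pos σ₀ hφ0), mul_comm _ (1 + φ)]
  exact one_sub_mul_mallowsZ_le σ₀ hφ0.le hφ1.le hadj
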